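/- Let X be a connected and locally arcwise connected metric space and let A, B, C ⊆ X be closed and nonempty sets with A ∩ B = ∅. Then C cuts the arcs between A and B if and only if C cuts the arcs between S(A) and S(B). -/

import Mathlib

/-- `C` cuts the arcs between `A` and `B` in the space `X`: every path in `X`
whose range meets both `A` and `B` has range meeting `C`. -/
def CutsArcs {X : Type*} [TopologicalSpace X] (A B C : Set X) : Prop :=
  ∀ γ : C(unitInterval, X),
    (Set.range γ ∩ A).Nonempty → (Set.range γ ∩ B).Nonempty →
    (Set.range γ ∩ C).Nonempty

/-- The side of `A` in `X` (relative to `B`): the set of points `x` such that every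
path starting at `x` and ending in `B` has range meeting `A`. -/
def sideOf {X : Type*} [TopologicalSpace X] (A B : Set X) : Set X :=
  {x : X | ∀ γ : C(unitInterval, X), γ 0 = x → γ 1 ∈ B →
    (Set.range γ ∩ A).Nonempty}

/-!
A path `η` from `x ∈ S(A)` to `y ∈ S(B)` must meet `A ∪ B`: follow a path from `y` towards `A`
until it first hits `A ∪ B`, at a point `z`. If `z ∈ A`, this arc runs from `y` to `A` while
avoiding `B`; if `z ∈ B`, then `η` followed by the arc runs from `x` to `B`, so it meets `A`, and
only `η` can. Once `η` meets `A` (resp. `B`), the part of `η` after (resp. before) that point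
joins `A` to `B`, using the definition of the side once more, hence meets `C`. Conversely
`A ⊆ S(A)` and `B ⊆ S(B)`.
-/

open Set unitInterval

section

variable {X : Type*} [TopologicalSpace X] {A B C : Set X}

theorem CutsArcs.mono {A' B' : Set X} (hA : A ⊆ A') (hB : B ⊆ B') (h : CutsArcs A' B' C) :
    CutsArcs A B C :=
  fun γ hγA hγB ↦ h γ (hγA.mono (inter_subset_inter_right _ hA))
    (hγB.mono (inter_subset_inter_right _ hB))

theorem cutsArcs_iff_forall_path :
    CutsArcs A B C ↔ ∀ a ∈ A, ∀ b ∈ B, ∀ γ : Path a b, (range γ ∩ C).Nonempty := by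
  refine ⟨fun h a ha b hb γ ↦ h γ.toContinuousMap ⟨a, ⟨0, γ.source⟩, ha⟩
    ⟨b, ⟨1, γ.target⟩, hb⟩, ?_⟩
  rintro h γ ⟨_, ⟨s, rfl⟩, hs⟩ ⟨_, ⟨t, rfl⟩, ht⟩
  let δ : Path (γ 0) (γ 1) := ⟨γ, rfl, rfl⟩
  obtain ⟨c, hc, hcC⟩ := h _ hs _ ht (δ.subpath s t)
  rw [Path.range_subpath] at hc
  exact ⟨c, image_subset_range _ _ hc, hcC⟩

theorem mem_sideOf_iff {x : X} :
    x ∈ sideOf A B ↔ ∀ b ∈ B, ∀ γ : Path x b, (range γ ∩ A).Nonempty := by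
  refine ⟨fun h b hb γ ↦ h γ.toContinuousMap γ.source (by simpa using hb), ?_⟩
  rintro h γ rfl hγ
  exact h _ hγ ⟨γ, rfl, rfl⟩

theorem subset_sideOf : A ⊆ sideOf A B :=
  fun _ hx γ hγ _ ↦ ⟨γ 0, mem_range_self 0, hγ ▸ hx⟩

theorem Path.exists_initial_subpath_first_mem {x y : X} (γ : Path x y) {F : Set X}
    (hF : IsClosed F) (hy : y ∈ F) :
    ∃ z ∈ F, ∃ δ : Path x z, range δ ⊆ range γ ∧ ∀ w ∈ range δ, w ∈ F → w = z := by
  set T : Set I := γ ⁻¹' F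
  have hTne : T.Nonempty := ⟨1, by simpa [T] using hy⟩
  have hT : sInf T ∈ T := (hF.preimage γ.continuous).sInf_mem hTne
  refine ⟨γ (sInf T), hT, (γ.subpath 0 (sInf T)).cast γ.source.symm rfl, ?_, ?_⟩ <;>
    rw [Path.cast_coe, Path.range_subpath_of_le _ _ _ nonneg']
  · exact image_subset_range _ _
  · rintro _ ⟨s, hs, rfl⟩ hsF
    rw [le_antisymm hs.2 (sInf_le hsF)]

theorem range_inter_union_nonempty_of_mem_sideOf [PathConnectedSpace X] (hA : IsClosed A)
    (hB : IsClosed B) (hAne : A.Nonempty) (hAB : Disjoint A B) {x y : X}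
    (hx : x ∈ sideOf A B) (hy : y ∈ sideOf B A) (η : Path x y) :
    (range η ∩ (A ∪ B)).Nonempty := by
  by_contra hη
  obtain ⟨a, ha⟩ := hAne
  obtain ⟨z, hz, ρ, -, hρ⟩ :=
    (PathConnectedSpace.somePath y a).exists_initial_subpath_first_mem (hA.union hB) (Or.inl ha)
  rcases hz with hzA | hzB
  · obtain ⟨w, hwρ, hwB⟩ := mem_sideOf_iff.mp hy z hzA ρ
    obtain rfl := hρ w hwρ (Or.inr hwB)
    exact hAB.ne_of_mem hzA hwB rfl
  · obtain ⟨w, hwηρ, hwA⟩ := mem_sideOf_iff.mp hx z hzB (η.trans ρ)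
    rw [Path.trans_range] at hwηρ
    rcases hwηρ with hwη | hwρ
    · exact hη ⟨w, hwη, Or.inl hwA⟩
    · obtain rfl := hρ w hwρ (Or.inl hwA)
      exact hAB.ne_of_mem hwA hzB rfl

theorem CutsArcs.range_inter_nonempty_of_mem_sideOf (h : CutsArcs A B C) {x y : X}
    (hx : x ∈ sideOf A B) (hy : y ∈ sideOf B A) (η : Path x y)
    (hη : (range η ∩ (A ∪ B)).Nonempty) : (range η ∩ C).Nonempty := by
  suffices ∃ s t : I, η s ∈ A ∧ η t ∈ B by
    obtain ⟨s, t, hs, ht⟩ := this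
    obtain ⟨c, hc, hcC⟩ := h (η.subpath s t).toContinuousMap
      ⟨η s, ⟨0, (η.subpath s t).source⟩, hs⟩ ⟨η t, ⟨1, (η.subpath s t).target⟩, ht⟩
    rw [Path.coe_toContinuousMap, Path.range_subpath] at hc
    exact ⟨c, image_subset_range _ _ hc, hcC⟩
  obtain ⟨_, ⟨r, rfl⟩, hrA | hrB⟩ := hη
  · obtain ⟨_, hw, hwB⟩ := mem_sideOf_iff.mp hy _ hrA ((η.subpath 1 r).cast η.target.symm rfl)
    rw [Path.cast_coe, Path.range_subpath] at hw
    obtain ⟨t, -, rfl⟩ := hw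
    exact ⟨r, t, hrA, hwB⟩
  · obtain ⟨_, hw, hwA⟩ := mem_sideOf_iff.mp hx _ hrB ((η.subpath 0 r).cast η.source.symm rfl)
    rw [Path.cast_coe, Path.range_subpath] at hw
    obtain ⟨s, -, rfl⟩ := hw
    exact ⟨s, r, hwA, hrB⟩

theorem CutsArcs.sideOf [PathConnectedSpace X] (hA : IsClosed A) (hB : IsClosed B)
    (hAne : A.Nonempty) (hAB : Disjoint A B) (h : CutsArcs A B C) :
    CutsArcs (sideOf A B) (sideOf B A) C :=
  cutsArcs_iff_forall_path.mpr fun _ hx _ hy η ↦ h.range_inter_nonempty_of_mem_sideOf hx hy η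
    (range_inter_union_nonempty_of_mem_sideOf hA hB hAne hAB hx hy η)

end

theorem stmt2_general {X : Type*} [MetricSpace X] [ConnectedSpace X] [LocallyPathConnectedSpace X]
    (A B C : Set X) (hA : IsClosed A) (hB : IsClosed B)
    (hAne : A.Nonempty)
    (hAB : A ∩ B = ∅) :
    CutsArcs A B C ↔ CutsArcs (sideOf A B) (sideOf B A) C := by
  have : PathConnectedSpace X := pathConnectedSpace_iff_connectedSpace.mpr ‹_›
  exact ⟨CutsArcs.sideOf hA hB hAne (disjoint_iff_inter_eq_empty.mpr hAB),
    CutsArcs.mono subset_sideOf subset_sideOf⟩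

theorem stmt2 {X : Type*} [MetricSpace X] [ConnectedSpace X] [LocallyPathConnectedSpace X]
    (A B C : Set X) (hA : IsClosed A) (hB : IsClosed B) (hC : IsClosed C)
    (hAne : A.Nonempty) (hBne : B.Nonempty) (hCne : C.Nonempty)
    (hAB : A ∩ B = ∅) :
    CutsArcs A B C ↔ CutsArcs (sideOf A B) (sideOf B A) C :=
  stmt2_general A B C hA hB hAne hAB
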